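/- arXiv:2408.12399 — 3 statements merged into one kernel-verified Lean document; each statement's English description precedes it below -/
import Mathlib

section
/- For every β > 0, the space Λ_A^β, equipped with the norm ‖x*‖_{Λ_A^β} = ‖x*‖_{X*} + sup_{t>0} t^{m−β} ‖(d/dt)^m T_t* x*‖_{X*}, is a Banach space (i.e. this is a norm on Λ_A^β and Λ_A^β is complete with respect to it). -/
open Filter Topology MeasureTheory Set

noncomputable section

variable {X : Type*} [NormedAddCommGroup X] [NormedSpace ℂ X] [CompleteSpace X]

/-- The `n`-th derivative on `(0,∞)` of the orbit `t ↦ x* ∘ T t` of the dual semigroup. -/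
def dualDeriv (T : ℝ → X →L[ℂ] X) (n : ℕ) (xs : X →L[ℂ] ℂ) (t : ℝ) : X →L[ℂ] ℂ :=
  iteratedDerivWithin n (fun s => xs.comp (T s)) (Set.Ioi 0) t

/-- A uniformly bounded, strongly continuous holomorphic semigroup on `(0,∞)`,
together with the standard properties of its time derivatives. -/
structure IsHoloSG (T : ℝ → X →L[ℂ] X) : Prop where
  semigroup : ∀ s t : ℝ, 0 < s → 0 < t → T (s + t) = (T s).comp (T t)
  strong : ∀ x : X, Tendsto (fun t => T t x) (𝓝[>] (0:ℝ)) (𝓝 x)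
  bounded : ∃ M : ℝ, ∀ t : ℝ, 0 < t → ‖T t‖ ≤ M
  smooth : ContDiffOn ℝ (⊤ : ℕ∞) T (Set.Ioi 0)
  derivComp : ∀ n : ℕ, ∀ s t : ℝ, 0 < s → 0 < t →
    iteratedDerivWithin n T (Set.Ioi 0) (t + s)
      = (iteratedDerivWithin n T (Set.Ioi 0) t).comp (T s)
  derivBound : ∃ C : ℝ, 0 < C ∧ ∀ n : ℕ, 1 ≤ n → ∀ t : ℝ, 0 < t →
    ‖iteratedDerivWithin n T (Set.Ioi 0) t‖ ≤ C ^ n / t ^ n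

/-- The smallest integer `> β` (for `β > 0`). -/
def mExp (β : ℝ) : ℕ := ⌊β⌋₊ + 1

/-- Membership in the Lipschitz space `Λ_A^β`. -/
def MemLambda (T : ℝ → X →L[ℂ] X) (β : ℝ) (xs : X →L[ℂ] ℂ) : Prop :=
  ∃ C : ℝ, ∀ t : ℝ, 0 < t →
    ‖dualDeriv T (mExp β) xs t‖ ≤ C * t ^ (β - (mExp β : ℝ))

/-- The norm of the Lipschitz space `Λ_A^β`. -/
def lambdaNorm (T : ℝ → X →L[ℂ] X) (β : ℝ) (xs : X →L[ℂ] ℂ) : ℝ :=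
  ‖xs‖ + ⨆ t : Set.Ioi (0:ℝ),
    (t : ℝ) ^ ((mExp β : ℝ) - β) * ‖dualDeriv T (mExp β) xs t‖

/-!
Proof idea: for `t > 0` the derivative `(d/dt)^m T_t* x*` is `x* ∘ T_t^{(m)}`, so each map
`x* ↦ t^{m-β} (d/dt)^m T_t* x*` is a bounded linear operator on `X*`. The Lipschitz norm is thus
`‖x*‖ + sup_i ‖L_i x*‖` for a family of bounded operators `L_i`, which is a norm on the subspace
where the supremum is finite. Its closed balls are intersections of closed sets in `X*`, so a
Cauchy sequence for it converges in `X*` and the limit lies in every ball the tail lies in.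
-/

set_option linter.unusedSectionVars false

section SupGraphNorm

variable {𝕜 E F ι : Type*} [NontriviallyNormedField 𝕜] [NormedAddCommGroup E] [NormedSpace 𝕜 E]
  [NormedAddCommGroup F] [NormedSpace 𝕜 F] (L : ι → E →L[𝕜] F)

def supBoundedSubmodule : Submodule 𝕜 E where
  carrier := {x | BddAbove (range fun i => ‖L i x‖)}
  zero_mem' := ⟨0, by rintro _ ⟨i, rfl⟩; simp⟩
  add_mem' := by
    rintro x y ⟨Cx, hx⟩ ⟨Cy, hy⟩
    refine ⟨Cx + Cy, ?_⟩
    rintro _ ⟨i, rfl⟩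
    calc ‖L i (x + y)‖ ≤ ‖L i x‖ + ‖L i y‖ := by rw [map_add]; exact norm_add_le _ _
      _ ≤ Cx + Cy := add_le_add (hx ⟨i, rfl⟩) (hy ⟨i, rfl⟩)
  smul_mem' := by
    rintro c x ⟨C, hx⟩
    refine ⟨‖c‖ * C, ?_⟩
    rintro _ ⟨i, rfl⟩
    simp only [map_smul, norm_smul]
    exact mul_le_mul_of_nonneg_left (hx ⟨i, rfl⟩) (norm_nonneg c)

def supGraphNorm (x : E) : ℝ := ‖x‖ + ⨆ i, ‖L i x‖

variable {L}

lemma norm_le_supGraphNorm (x : E) : ‖x‖ ≤ supGraphNorm L x :=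
  le_add_of_nonneg_right (Real.iSup_nonneg fun _ => norm_nonneg _)

lemma supGraphNorm_eq_zero_iff {x : E} : supGraphNorm L x = 0 ↔ x = 0 := by
  refine ⟨fun h => norm_eq_zero.mp (le_antisymm (h ▸ norm_le_supGraphNorm x) (norm_nonneg x)),
    fun h => ?_⟩
  simp [supGraphNorm, h, Real.iSup_const_zero]

lemma supGraphNorm_smul (c : 𝕜) (x : E) : supGraphNorm L (c • x) = ‖c‖ * supGraphNorm L x := by
  simp only [supGraphNorm, map_smul, norm_smul, Real.mul_iSup_of_nonneg (norm_nonneg c), mul_add]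

lemma supGraphNorm_add_le {x y : E} (hx : x ∈ supBoundedSubmodule L)
    (hy : y ∈ supBoundedSubmodule L) :
    supGraphNorm L (x + y) ≤ supGraphNorm L x + supGraphNorm L y := by
  have hsup : ⨆ i, ‖L i (x + y)‖ ≤ (⨆ i, ‖L i x‖) + ⨆ i, ‖L i y‖ := by
    refine Real.iSup_le (fun i => ?_)
      (add_nonneg (Real.iSup_nonneg fun _ => norm_nonneg _)
        (Real.iSup_nonneg fun _ => norm_nonneg _))
    calc ‖L i (x + y)‖ ≤ ‖L i x‖ + ‖L i y‖ := by rw [map_add]; exact norm_add_le _ _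
      _ ≤ (⨆ i, ‖L i x‖) + ⨆ i, ‖L i y‖ := add_le_add (le_ciSup hx i) (le_ciSup hy i)
  simp only [supGraphNorm]
  linarith [norm_add_le x y]

lemma mem_and_supGraphNorm_le_iff {x : E} {ε : ℝ} :
    x ∈ supBoundedSubmodule L ∧ supGraphNorm L x ≤ ε ↔ ‖x‖ ≤ ε ∧ ∀ i, ‖x‖ + ‖L i x‖ ≤ ε := by
  constructor
  · rintro ⟨hx, hε⟩
    exact ⟨(norm_le_supGraphNorm x).trans hε,
      fun i => (add_le_add_right (le_ciSup hx i) _).trans hε⟩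
  · rintro ⟨hxε, hi⟩
    have hle : ∀ i, ‖L i x‖ ≤ ε - ‖x‖ := fun i => by linarith [hi i]
    refine ⟨⟨ε - ‖x‖, by rintro _ ⟨i, rfl⟩; exact hle i⟩, ?_⟩
    have := Real.iSup_le hle (sub_nonneg.mpr hxε)
    simp only [supGraphNorm]
    linarith

lemma isClosed_supGraphNorm_ball (ε : ℝ) :
    IsClosed {x : E | x ∈ supBoundedSubmodule L ∧ supGraphNorm L x ≤ ε} := by
  simp only [mem_and_supGraphNorm_le_iff, ofPred_and, ofPred_forall]
  exact (isClosed_le continuous_norm continuous_const).inter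
    (isClosed_iInter fun i =>
      isClosed_le (continuous_norm.add (L i).continuous.norm) continuous_const)

lemma exists_tendsto_supGraphNorm [CompleteSpace E] {f : ℕ → E}
    (hf : ∀ k, f k ∈ supBoundedSubmodule L)
    (hcauchy : ∀ ε : ℝ, 0 < ε → ∃ N : ℕ, ∀ p q : ℕ, N ≤ p → N ≤ q →
      supGraphNorm L (f p - f q) < ε) :
    ∃ g ∈ supBoundedSubmodule L, Tendsto (fun k => supGraphNorm L (f k - g)) atTop (𝓝 0) := by
  have hcauchyE : CauchySeq f := Metric.cauchySeq_iff.mpr fun ε hε => by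
    obtain ⟨N, hN⟩ := hcauchy ε hε
    exact ⟨N, fun p hp q hq => (dist_eq_norm (f p) (f q)).trans_lt
      ((norm_le_supGraphNorm _).trans_lt (hN p q hp hq))⟩
  obtain ⟨g, hg⟩ := cauchySeq_tendsto_of_complete hcauchyE
  have htail : ∀ ε : ℝ, 0 < ε → ∃ N : ℕ, ∀ p ≥ N,
      f p - g ∈ supBoundedSubmodule L ∧ supGraphNorm L (f p - g) ≤ ε := by
    intro ε hε
    obtain ⟨N, hN⟩ := hcauchy ε hε
    refine ⟨N, fun p hp => (isClosed_supGraphNorm_ball ε).mem_of_tendsto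
      (tendsto_const_nhds.sub hg) ?_⟩
    filter_upwards [eventually_ge_atTop N] with q hq
    exact ⟨sub_mem (hf p) (hf q), (hN p q hp hq).le⟩
  obtain ⟨N, hN⟩ := htail 1 one_pos
  refine ⟨g, by simpa using sub_mem (hf N) (hN N le_rfl).1,
    tendsto_order.mpr ⟨fun a ha => ?_, fun a ha => ?_⟩⟩
  · exact Eventually.of_forall fun k =>
      ha.trans_le ((norm_nonneg (f k - g)).trans (norm_le_supGraphNorm _))
  · obtain ⟨N, hN⟩ := htail (a / 2) (half_pos ha)
    filter_upwards [eventually_ge_atTop N] with k hk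
    exact (hN k hk).2.trans_lt (half_lt_self ha)

end SupGraphNorm

lemma le_mul_rpow_sub_iff {t a C β γ : ℝ} (ht : 0 < t) :
    a ≤ C * t ^ (β - γ) ↔ t ^ (γ - β) * a ≤ C := by
  rw [← neg_sub γ β, Real.rpow_neg ht.le, le_mul_inv_iff₀ (Real.rpow_pos_of_pos ht _), mul_comm]

lemma dualDeriv_eq_comp {T : ℝ → X →L[ℂ] X} (hT : ContDiffOn ℝ (⊤ : ℕ∞) T (Ioi 0))
    (n : ℕ) (xs : X →L[ℂ] ℂ) {t : ℝ} (ht : 0 < t) :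
    dualDeriv T n xs t = xs.comp (iteratedDerivWithin n T (Ioi 0) t) := by
  have h := ContinuousLinearMap.iteratedFDerivWithin_comp_left
    (g := ((ContinuousLinearMap.compL ℂ X X ℂ) xs).restrictScalars ℝ)
    (hT t ht) (uniqueDiffOn_Ioi 0) ht (i := n) (by exact_mod_cast le_top)
  rw [dualDeriv, iteratedDerivWithin_eq_iteratedFDerivWithin,
    iteratedDerivWithin_eq_iteratedFDerivWithin]
  -- the `n`-th derivative is the `n`-th Fréchet derivative evaluated at `(1, …, 1)`
  exact congrArg (· fun _ => (1 : ℝ)) h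

def lambdaFamily (T : ℝ → X →L[ℂ] X) (β : ℝ) (t : Ioi (0 : ℝ)) :
    (X →L[ℂ] ℂ) →L[ℂ] (X →L[ℂ] ℂ) :=
  (((t : ℝ) ^ ((mExp β : ℝ) - β) : ℝ) : ℂ) •
    (ContinuousLinearMap.compL ℂ X X ℂ).flip (iteratedDerivWithin (mExp β) T (Ioi 0) t)

lemma norm_lambdaFamily_apply {T : ℝ → X →L[ℂ] X} (hT : ContDiffOn ℝ (⊤ : ℕ∞) T (Ioi 0))
    (β : ℝ) (t : Ioi (0 : ℝ)) (xs : X →L[ℂ] ℂ) :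
    ‖lambdaFamily T β t xs‖ = (t : ℝ) ^ ((mExp β : ℝ) - β) * ‖dualDeriv T (mExp β) xs t‖ := by
  rw [dualDeriv_eq_comp hT _ _ t.2, lambdaFamily, smul_apply, norm_smul,
    Complex.norm_real, Real.norm_of_nonneg (Real.rpow_nonneg t.2.le _)]
  rfl

lemma lambdaNorm_eq_supGraphNorm {T : ℝ → X →L[ℂ] X} (hT : ContDiffOn ℝ (⊤ : ℕ∞) T (Ioi 0))
    (β : ℝ) (xs : X →L[ℂ] ℂ) : lambdaNorm T β xs = supGraphNorm (lambdaFamily T β) xs := by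
  simp only [lambdaNorm, supGraphNorm, norm_lambdaFamily_apply hT]

lemma memLambda_iff_mem_supBoundedSubmodule {T : ℝ → X →L[ℂ] X}
    (hT : ContDiffOn ℝ (⊤ : ℕ∞) T (Ioi 0)) (β : ℝ) (xs : X →L[ℂ] ℂ) :
    MemLambda T β xs ↔ xs ∈ supBoundedSubmodule (lambdaFamily T β) := by
  simp only [MemLambda, supBoundedSubmodule, Submodule.mem_mk, AddSubmonoid.mem_mk,
    AddSubsemigroup.mem_mk, mem_ofPred_eq, bddAbove_def, forall_mem_range, Subtype.forall,
    mem_Ioi, norm_lambdaFamily_apply hT]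
  exact exists_congr fun C => forall₂_congr fun t ht => le_mul_rpow_sub_iff ht

theorem stmt0_general (T : ℝ → X →L[ℂ] X) (hT : IsHoloSG T) (β : ℝ) :
    (MemLambda T β (0 : X →L[ℂ] ℂ)) ∧
    (∀ xs ys : X →L[ℂ] ℂ, MemLambda T β xs → MemLambda T β ys →
      MemLambda T β (xs + ys)) ∧
    (∀ (c : ℂ) (xs : X →L[ℂ] ℂ), MemLambda T β xs → MemLambda T β (c • xs)) ∧
    (∀ xs : X →L[ℂ] ℂ, MemLambda T β xs → (lambdaNorm T β xs = 0 ↔ xs = 0)) ∧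
    (∀ (c : ℂ) (xs : X →L[ℂ] ℂ), MemLambda T β xs →
      lambdaNorm T β (c • xs) = ‖c‖ * lambdaNorm T β xs) ∧
    (∀ xs ys : X →L[ℂ] ℂ, MemLambda T β xs → MemLambda T β ys →
      lambdaNorm T β (xs + ys) ≤ lambdaNorm T β xs + lambdaNorm T β ys) ∧
    (∀ f : ℕ → X →L[ℂ] ℂ, (∀ k, MemLambda T β (f k)) →
      (∀ ε : ℝ, 0 < ε → ∃ N : ℕ, ∀ p q : ℕ, N ≤ p → N ≤ q →
        lambdaNorm T β (f p - f q) < ε) →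
      ∃ g : X →L[ℂ] ℂ, MemLambda T β g ∧
        Tendsto (fun k => lambdaNorm T β (f k - g)) atTop (𝓝 0)) := by
  simp only [lambdaNorm_eq_supGraphNorm hT.smooth,
    memLambda_iff_mem_supBoundedSubmodule hT.smooth]
  exact ⟨zero_mem _, fun _ _ => add_mem, fun c _ => Submodule.smul_mem _ c,
    fun _ _ => supGraphNorm_eq_zero_iff, fun c xs _ => supGraphNorm_smul c xs,
    fun _ _ => supGraphNorm_add_le, fun _ hf hcauchy => exists_tendsto_supGraphNorm hf hcauchy⟩

/-- `Λ_A^β`, with the norm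
`‖x*‖ + sup_{t>0} t^{m-β} ‖(d/dt)^m T_t* x*‖`, is a Banach space:
it is a linear subspace of `X*`, `lambdaNorm` is a norm on it, and it is
complete with respect to this norm. -/
theorem stmt0 (T : ℝ → X →L[ℂ] X) (hT : IsHoloSG T) (β : ℝ) (hβ : 0 < β) :
    (MemLambda T β (0 : X →L[ℂ] ℂ)) ∧
    (∀ xs ys : X →L[ℂ] ℂ, MemLambda T β xs → MemLambda T β ys →
      MemLambda T β (xs + ys)) ∧
    (∀ (c : ℂ) (xs : X →L[ℂ] ℂ), MemLambda T β xs → MemLambda T β (c • xs)) ∧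
    (∀ xs : X →L[ℂ] ℂ, MemLambda T β xs → (lambdaNorm T β xs = 0 ↔ xs = 0)) ∧
    (∀ (c : ℂ) (xs : X →L[ℂ] ℂ), MemLambda T β xs →
      lambdaNorm T β (c • xs) = ‖c‖ * lambdaNorm T β xs) ∧
    (∀ xs ys : X →L[ℂ] ℂ, MemLambda T β xs → MemLambda T β ys →
      lambdaNorm T β (xs + ys) ≤ lambdaNorm T β xs + lambdaNorm T β ys) ∧
    (∀ f : ℕ → X →L[ℂ] ℂ, (∀ k, MemLambda T β (f k)) →
      (∀ ε : ℝ, 0 < ε → ∃ N : ℕ, ∀ p q : ℕ, N ≤ p → N ≤ q →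
        lambdaNorm T β (f p - f q) < ε) →
      ∃ g : X →L[ℂ] ℂ, MemLambda T β g ∧
        Tendsto (fun k => lambdaNorm T β (f k - g)) atTop (𝓝 0)) :=
  stmt0_general T hT β
end
end

section
/- Let β > 0 and let n > m > β be integers, and let x* ∈ X*. Then the two conditions '‖(d/dt)^m T_t* x*‖_{X*} ≤ C_m t^{β−m} for all t > 0' and '‖(d/dt)^n T_t* x*‖_{X*} ≤ C_n t^{β−n} for all t > 0' are equivalent (one holds for some finite constant iff the other does). Moreover there is a constant C > 1, depending on m and n (and on the semigroup) but independent of x*, such that the smallest constants C_m, C_n for which the respective inequalities hold satisfy C^{−1} C_m ≤ C_n ≤ C C_m. -/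
open Filter Topology MeasureTheory Set

noncomputable section

variable {X : Type*} [NormedAddCommGroup X] [NormedSpace ℂ X] [CompleteSpace X]

/-!
Differentiating the semigroup law gives `T⁽ᵏ⁺ʲ⁾(a + s) = T⁽ᵏ⁾(a) ∘ T⁽ʲ⁾(s)`, so the `n`-th dual
derivative at `t` is the `m`-th one at `t/2` composed with `T⁽ⁿ⁻ᵐ⁾(t/2)`, whose norm is
`O(t^(m-n))`: a bound of order `t^(β-m)` becomes one of order `t^(β-n)`. Conversely, for
`j ≥ 1` the `j`-th dual derivative tends to `0` at infinity, so it is minus the integral over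
`(t, ∞)` of the `(j+1)`-st; since `j > β`, integrating `s^(β-j-1)` gives a bound
`t^(β-j) / (j-β)`, and iterating descends from `n` to `m`. The smallest admissible constants
are the weighted suprema, so these two transfers compare them.
-/

theorem ContDiffOn.hasDerivAt_iteratedDerivWithin {E : Type*} [NormedAddCommGroup E]
    [NormedSpace ℝ E] {f : ℝ → E} {s : Set ℝ} {n : WithTop ℕ∞} (hf : ContDiffOn ℝ n f s)
    (hs : IsOpen s) {k : ℕ} (hk : k < n) {t : ℝ} (ht : t ∈ s) :
    HasDerivAt (iteratedDerivWithin k f s) (iteratedDerivWithin (k + 1) f s t) t := by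
  rw [iteratedDerivWithin_succ]
  exact (hf.differentiableOn_iteratedDerivWithin hk hs.uniqueDiffOn t ht).hasDerivWithinAt
    |>.hasDerivAt (hs.mem_nhds ht)

theorem ContinuousLinearMap.iteratedDerivWithin_comp_left {𝕜 F G : Type*}
    [NontriviallyNormedField 𝕜] [NormedAddCommGroup F] [NormedSpace 𝕜 F] [NormedAddCommGroup G] [NormedSpace 𝕜 G]
    {f : 𝕜 → F} {s : Set 𝕜} {x : 𝕜} {n : WithTop ℕ∞} (g : F →L[𝕜] G)
    (hf : ContDiffWithinAt 𝕜 n f s x) (hs : UniqueDiffOn 𝕜 s) (hx : x ∈ s) {i : ℕ}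
    (hi : i ≤ n) :
    iteratedDerivWithin i (g ∘ f) s x = g (iteratedDerivWithin i f s x) := by
  simp only [iteratedDerivWithin_eq_iteratedFDerivWithin,
    g.iteratedFDerivWithin_comp_left hf hs hx hi,
    ContinuousLinearMap.compContinuousMultilinearMap_coe, Function.comp_apply]

theorem norm_le_of_hasDerivAt_of_tendsto_zero {E : Type*} [NormedAddCommGroup E]
    [NormedSpace ℝ E] [CompleteSpace E] {f f' : ℝ → E} {t γ D : ℝ} (ht : 0 < t) (hγ : γ < -1)
    (hf : ∀ s ∈ Ici t, HasDerivAt f (f' s) s) (hf' : ContinuousOn f' (Ioi t))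
    (hlim : Tendsto f atTop (𝓝 0)) (hbound : ∀ s ∈ Ioi t, ‖f' s‖ ≤ D * s ^ γ) :
    ‖f t‖ ≤ D * (-t ^ (γ + 1) / (γ + 1)) := by
  have hbound' : ∀ᵐ s ∂volume.restrict (Ioi t), ‖f' s‖ ≤ D * s ^ γ :=
    ae_restrict_of_forall_mem measurableSet_Ioi hbound
  have hmaj : IntegrableOn (fun s => D * s ^ γ) (Ioi t) :=
    (integrableOn_Ioi_rpow_of_lt hγ ht).const_mul D
  have hint : IntegrableOn f' (Ioi t) :=
    hmaj.mono' (hf'.aestronglyMeasurable measurableSet_Ioi) hbound'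
  have hftc : ∫ s in Ioi t, f' s = -f t := by
    simpa using integral_Ioi_of_hasDerivAt_of_tendsto' hf hint hlim
  calc ‖f t‖ = ‖∫ s in Ioi t, f' s‖ := by rw [hftc, norm_neg]
    _ ≤ ∫ s in Ioi t, D * s ^ γ := norm_integral_le_of_norm_le hmaj hbound'
    _ = D * (-t ^ (γ + 1) / (γ + 1)) := by
      rw [integral_const_mul, integral_Ioi_rpow_of_lt hγ ht]

theorem rpow_mul_le_iff_le_mul_rpow {a b t x D : ℝ} (hab : a + b = 0) (ht : 0 < t) :
    t ^ a * x ≤ D ↔ x ≤ D * t ^ b := by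
  rw [show a = -b by linarith, Real.rpow_neg ht.le, inv_mul_le_iff₀ (Real.rpow_pos_of_pos ht b),
    mul_comm]

section WeightedSup

variable {f : ℝ → ℝ} {a b D : ℝ}

theorem ciSup_rpow_mul_le (hab : a + b = 0) (h : ∀ t, 0 < t → f t ≤ D * t ^ b) :
    ⨆ t : Ioi (0:ℝ), (t : ℝ) ^ a * f t ≤ D :=
  ciSup_le fun t => (rpow_mul_le_iff_le_mul_rpow hab t.2).2 (h t t.2)

theorem le_ciSup_rpow_mul_mul_rpow (hab : a + b = 0) (h : ∀ t, 0 < t → f t ≤ D * t ^ b) :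
    ∀ t, 0 < t → f t ≤ (⨆ t : Ioi (0:ℝ), (t : ℝ) ^ a * f t) * t ^ b := by
  have hbdd : BddAbove (range fun t : Ioi (0:ℝ) => (t : ℝ) ^ a * f t) := by
    refine ⟨D, ?_⟩
    rintro _ ⟨t, rfl⟩
    exact (rpow_mul_le_iff_le_mul_rpow hab t.2).2 (h t t.2)
  exact fun t ht => (rpow_mul_le_iff_le_mul_rpow hab ht).1 (le_ciSup hbdd ⟨t, ht⟩)

end WeightedSup

section DualSemigroup

variable {E : Type*} [NormedAddCommGroup E] [NormedSpace ℂ E] {T : ℝ → E →L[ℂ] E}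

def HasDualDerivBound (T : ℝ → E →L[ℂ] E) (β : ℝ) (k : ℕ) (xs : E →L[ℂ] ℂ) (D : ℝ) : Prop :=
  ∀ t : ℝ, 0 < t → ‖dualDeriv T k xs t‖ ≤ D * t ^ (β - (k : ℝ))

namespace IsHoloSG

theorem hasDerivAt_iteratedDerivWithin (hT : IsHoloSG T) (k : ℕ) {t : ℝ} (ht : 0 < t) :
    HasDerivAt (iteratedDerivWithin k T (Ioi 0)) (iteratedDerivWithin (k + 1) T (Ioi 0) t) t :=
  hT.smooth.hasDerivAt_iteratedDerivWithin isOpen_Ioi (by exact_mod_cast WithTop.coe_lt_top k) ht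

theorem contDiffOn_dualOrbit (hT : IsHoloSG T) (xs : E →L[ℂ] ℂ) :
    ContDiffOn ℝ (⊤ : ℕ∞) (fun s => xs.comp (T s)) (Ioi 0) :=
  ((ContinuousLinearMap.compL ℂ E E ℂ xs).restrictScalars ℝ).contDiff.comp_contDiffOn hT.smooth

theorem dualDeriv_eq_comp (hT : IsHoloSG T) (k : ℕ) (xs : E →L[ℂ] ℂ) {t : ℝ} (ht : 0 < t) :
    dualDeriv T k xs t = xs.comp (iteratedDerivWithin k T (Ioi 0) t) :=
  ((ContinuousLinearMap.compL ℂ E E ℂ xs).restrictScalars ℝ).iteratedDerivWithin_comp_left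
    (hT.smooth t ht) (uniqueDiffOn_Ioi 0) ht (by exact_mod_cast le_top)

theorem hasDerivAt_dualDeriv (hT : IsHoloSG T) (k : ℕ) (xs : E →L[ℂ] ℂ) {t : ℝ} (ht : 0 < t) :
    HasDerivAt (dualDeriv T k xs) (dualDeriv T (k + 1) xs t) t :=
  (hT.contDiffOn_dualOrbit xs).hasDerivAt_iteratedDerivWithin isOpen_Ioi
    (by exact_mod_cast WithTop.coe_lt_top k) ht

theorem iteratedDerivWithin_add (hT : IsHoloSG T) (k j : ℕ) {a s : ℝ} (ha : 0 < a) (hs : 0 < s) :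
    iteratedDerivWithin (k + j) T (Ioi 0) (a + s)
      = (iteratedDerivWithin k T (Ioi 0) a).comp (iteratedDerivWithin j T (Ioi 0) s) := by
  induction j generalizing s with
  | zero => simpa [iteratedDerivWithin_zero] using hT.derivComp k s a hs ha
  | succ j ih =>
    have hL : HasDerivAt (fun s => iteratedDerivWithin (k + j) T (Ioi 0) (a + s))
        (iteratedDerivWithin (k + j + 1) T (Ioi 0) (a + s)) s :=
      (hT.hasDerivAt_iteratedDerivWithin (k + j) (add_pos ha hs)).comp_const_add a s
    have hR : HasDerivAt (fun s => (iteratedDerivWithin k T (Ioi 0) a).comp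
        (iteratedDerivWithin j T (Ioi 0) s))
        ((iteratedDerivWithin k T (Ioi 0) a).comp (iteratedDerivWithin (j + 1) T (Ioi 0) s)) s :=
      ((ContinuousLinearMap.compL ℂ E E E _).restrictScalars ℝ).hasFDerivAt.comp_hasDerivAt s
        (hT.hasDerivAt_iteratedDerivWithin j hs)
    have hEq : (fun s => iteratedDerivWithin (k + j) T (Ioi 0) (a + s)) =ᶠ[𝓝 s]
        fun s => (iteratedDerivWithin k T (Ioi 0) a).comp (iteratedDerivWithin j T (Ioi 0) s) :=
      eventually_of_mem (Ioi_mem_nhds hs) fun u hu => ih hu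
    exact (hEq.hasDerivAt_iff.1 hL).unique hR

theorem dualDeriv_add (hT : IsHoloSG T) (k j : ℕ) (xs : E →L[ℂ] ℂ) {a s : ℝ} (ha : 0 < a)
    (hs : 0 < s) :
    dualDeriv T (k + j) xs (a + s)
      = (dualDeriv T k xs a).comp (iteratedDerivWithin j T (Ioi 0) s) := by
  rw [hT.dualDeriv_eq_comp _ _ (add_pos ha hs), hT.iteratedDerivWithin_add k j ha hs,
    hT.dualDeriv_eq_comp _ _ ha, ContinuousLinearMap.comp_assoc]

theorem tendsto_dualDeriv_atTop (hT : IsHoloSG T) {k : ℕ} (hk : 1 ≤ k) (xs : E →L[ℂ] ℂ) :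
    Tendsto (dualDeriv T k xs) atTop (𝓝 0) := by
  obtain ⟨C, -, hC⟩ := hT.derivBound
  have hdecay : Tendsto (fun R : ℝ => ‖xs‖ * (C ^ k / R ^ k)) atTop (𝓝 0) := by
    simpa using (tendsto_const_nhds.div_atTop (tendsto_pow_atTop (by omega))).const_mul ‖xs‖
  refine squeeze_zero_norm' ?_ hdecay
  filter_upwards [eventually_gt_atTop 0] with R hR
  rw [hT.dualDeriv_eq_comp k xs hR]
  exact (xs.opNorm_comp_le _).trans (mul_le_mul_of_nonneg_left (hC k hk R hR) (norm_nonneg _))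

theorem hasDualDerivBound_of_lt (hT : IsHoloSG T) (β : ℝ) {m n : ℕ} (hmn : m < n) :
    ∃ K, 0 < K ∧ ∀ xs D, HasDualDerivBound T β m xs D → HasDualDerivBound T β n xs (D * K) := by
  obtain ⟨C, hC, hder⟩ := hT.derivBound
  refine ⟨C ^ (n - m) * 2 ^ ((n : ℝ) - β), by positivity, fun xs D hD t ht => ?_⟩
  have ht2 : 0 < t / 2 := half_pos ht
  have hsplit : dualDeriv T n xs t
      = (dualDeriv T m xs (t / 2)).comp (iteratedDerivWithin (n - m) T (Ioi 0) (t / 2)) := by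
    simpa [Nat.add_sub_cancel' hmn.le] using hT.dualDeriv_add m (n - m) xs ht2 ht2
  have hpow : (t / 2) ^ (β - m) / (t / 2) ^ (n - m) = 2 ^ ((n : ℝ) - β) * t ^ (β - n) := by
    rw [← Real.rpow_natCast, Nat.cast_sub hmn.le, ← Real.rpow_sub ht2,
      Real.div_rpow ht.le zero_le_two, show β - m - (n - m) = β - n by ring, div_eq_mul_inv,
      ← Real.rpow_neg zero_le_two, neg_sub, mul_comm]
  have hm := hD (t / 2) ht2
  calc ‖dualDeriv T n xs t‖
      ≤ ‖dualDeriv T m xs (t / 2)‖ * ‖iteratedDerivWithin (n - m) T (Ioi 0) (t / 2)‖ :=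
        hsplit ▸ ContinuousLinearMap.opNorm_comp_le _ _
    _ ≤ D * (t / 2) ^ (β - m) * (C ^ (n - m) / (t / 2) ^ (n - m)) :=
        mul_le_mul hm (hder _ (by omega) _ ht2) (norm_nonneg _) ((norm_nonneg _).trans hm)
    _ = D * C ^ (n - m) * ((t / 2) ^ (β - m) / (t / 2) ^ (n - m)) := by ring
    _ = D * (C ^ (n - m) * 2 ^ ((n : ℝ) - β)) * t ^ (β - n) := by
        rw [hpow]
        ring

theorem hasDualDerivBound_of_succ (hT : IsHoloSG T) {β : ℝ} {j : ℕ} (hj : 1 ≤ j) (hβj : β < j)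
    {xs : E →L[ℂ] ℂ} {D : ℝ} (hD : HasDualDerivBound T β (j + 1) xs D) :
    HasDualDerivBound T β j xs (D * ((j : ℝ) - β)⁻¹) := by
  intro t ht
  have hγ : β - ((j + 1 : ℕ) : ℝ) + 1 = β - j := by push_cast; ring
  have h := norm_le_of_hasDerivAt_of_tendsto_zero ht (by push_cast; linarith)
    (fun s hs => hT.hasDerivAt_dualDeriv j xs (ht.trans_le hs))
    (fun s hs => (hT.hasDerivAt_dualDeriv (j + 1) xs (ht.trans hs)).continuousAt.continuousWithinAt)
    (hT.tendsto_dualDeriv_atTop hj xs) (fun s hs => hD s (ht.trans hs))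
  rw [hγ, neg_div, ← div_neg, neg_sub, div_eq_inv_mul] at h
  linarith

theorem hasDualDerivBound_of_gt (hT : IsHoloSG T) {β : ℝ} (hβ : 0 < β) {m n : ℕ}
    (hβm : β < m) (hmn : m < n) :
    ∃ K, 0 < K ∧ ∀ xs D, HasDualDerivBound T β n xs D → HasDualDerivBound T β m xs (D * K) := by
  have hm : 1 ≤ m := Nat.cast_pos.mp (hβ.trans hβm)
  induction n, hmn using Nat.le_induction with
  | base => exact ⟨_, inv_pos.2 (sub_pos.2 hβm), fun xs D => hT.hasDualDerivBound_of_succ hm hβm⟩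
  | succ n hmn ih =>
    obtain ⟨K, hK, hdown⟩ := ih
    have hβn : β < n := hβm.trans (by exact_mod_cast hmn)
    refine ⟨(n - β)⁻¹ * K, mul_pos (inv_pos.2 (sub_pos.2 hβn)) hK, fun xs D hD => ?_⟩
    rw [← mul_assoc]
    exact hdown xs _ (hT.hasDualDerivBound_of_succ (by omega) hβn hD)

end IsHoloSG

end DualSemigroup

/-- for integers `n > m > β`, the conditions
`‖(d/dt)^m T_t* x*‖ ≤ C_m t^{β-m}` and `‖(d/dt)^n T_t* x*‖ ≤ C_n t^{β-n}` are
equivalent, and the smallest admissible constants (realized as the suprema of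
`t^{m-β}‖(d/dt)^m T_t* x*‖`, resp. `t^{n-β}‖(d/dt)^n T_t* x*‖`, over `t > 0`)
are comparable, with a comparison constant independent of `x*`. -/
theorem stmt1 (T : ℝ → X →L[ℂ] X) (hT : IsHoloSG T) (β : ℝ) (hβ : 0 < β)
    (m n : ℕ) (hβm : β < (m : ℝ)) (hmn : m < n) :
    ∃ C : ℝ, 1 < C ∧ ∀ xs : X →L[ℂ] ℂ,
      ((∃ Cm : ℝ, ∀ t : ℝ, 0 < t →
          ‖dualDeriv T m xs t‖ ≤ Cm * t ^ (β - (m : ℝ))) ↔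
       (∃ Cn : ℝ, ∀ t : ℝ, 0 < t →
          ‖dualDeriv T n xs t‖ ≤ Cn * t ^ (β - (n : ℝ)))) ∧
      ((∃ Cm : ℝ, ∀ t : ℝ, 0 < t →
          ‖dualDeriv T m xs t‖ ≤ Cm * t ^ (β - (m : ℝ))) →
        (C⁻¹ * (⨆ t : Set.Ioi (0:ℝ), (t : ℝ) ^ ((m : ℝ) - β) * ‖dualDeriv T m xs t‖)
            ≤ ⨆ t : Set.Ioi (0:ℝ), (t : ℝ) ^ ((n : ℝ) - β) * ‖dualDeriv T n xs t‖) ∧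
        ((⨆ t : Set.Ioi (0:ℝ), (t : ℝ) ^ ((n : ℝ) - β) * ‖dualDeriv T n xs t‖)
            ≤ C * ⨆ t : Set.Ioi (0:ℝ), (t : ℝ) ^ ((m : ℝ) - β) * ‖dualDeriv T m xs t‖)) := by
  obtain ⟨K₁, hK₁, hup⟩ := hT.hasDualDerivBound_of_lt β hmn
  obtain ⟨K₂, hK₂, hdown⟩ := hT.hasDualDerivBound_of_gt hβ hβm hmn
  refine ⟨1 + K₁ + K₂, by linarith, fun xs => ⟨⟨fun ⟨D, hD⟩ => ⟨_, hup xs D hD⟩,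
    fun ⟨D, hD⟩ => ⟨_, hdown xs D hD⟩⟩, fun ⟨D, hD⟩ => ?_⟩⟩
  have hexp (k : ℕ) : ((k : ℝ) - β) + (β - k) = 0 := by ring
  set Sm := ⨆ t : Set.Ioi (0:ℝ), (t : ℝ) ^ ((m : ℝ) - β) * ‖dualDeriv T m xs t‖
  set Sn := ⨆ t : Set.Ioi (0:ℝ), (t : ℝ) ^ ((n : ℝ) - β) * ‖dualDeriv T n xs t‖
  have hSn : Sn ≤ Sm * K₁ :=
    ciSup_rpow_mul_le (hexp n) (hup xs Sm (le_ciSup_rpow_mul_mul_rpow (hexp m) hD))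
  have hSm : Sm ≤ Sn * K₂ :=
    ciSup_rpow_mul_le (hexp m) (hdown xs Sn (le_ciSup_rpow_mul_mul_rpow (hexp n) (hup xs D hD)))
  have hweight (t : Set.Ioi (0:ℝ)) (k : ℕ) : 0 ≤ (t : ℝ) ^ ((k : ℝ) - β) * ‖dualDeriv T k xs t‖ :=
    mul_nonneg (Real.rpow_nonneg t.2.le _) (norm_nonneg _)
  have hSm₀ : 0 ≤ Sm := Real.iSup_nonneg fun t => hweight t m
  have hSn₀ : 0 ≤ Sn := Real.iSup_nonneg fun t => hweight t n
  refine ⟨?_, by nlinarith⟩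
  rw [inv_mul_le_iff₀ (by linarith)]
  nlinarith
end
end

section
/- Let Y be a Banach space and let φ : (0,∞) → Y be an infinitely differentiable bounded function such that for every integer n ≥ 1 there is a constant C_n with ‖φ^{(n)}(t)‖ ≤ C_n t^{−n} for all t > 0. Then the function ψ(t) := ∫₀^∞ e^{−u} φ(t²/(4u)) u^{−1/2} du is infinitely differentiable on (0,∞), and for every integer n ≥ 0 its derivatives are given by ψ^{(2n)}(t) = (−1)^n ∫₀^∞ e^{−u} φ^{(n)}(t²/(4u)) u^{−1/2} du and ψ^{(2n+1)}(t) = (−1)^n ∫₀^∞ e^{−u} (t/(2u)) φ^{(n+1)}(t²/(4u)) u^{−1/2} du. -/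
/-!
Write `K n k t u = e^{-u} (t/2u)^k u^{-1/2} φ^{(n+k)}(t²/4u)`. Its `t`-derivative is
`(k/t) K n k + K n (k+1)`, and the symbol estimates bound `K n k t u` by `C u^{n-1/2} e^{-u}`
locally uniformly in `t > 0`, so `∫ K n k` may be differentiated under the integral sign. Hence
`(∫ K n 0)' = ∫ K n 1`, while `(∫ K n 1)' = ∫ (t⁻¹ K n 1 + K n 2) = -∫ K (n+1) 0`: the last identity
is an integration by parts in `u` of `K (n+1) 0`, whose boundary terms vanish by the same bound.
-/

open Filter Topology MeasureTheory Set Real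

noncomputable section

section DerivChain

variable {𝕜 F : Type*} [NontriviallyNormedField 𝕜] [NormedAddCommGroup F] [NormedSpace 𝕜 F]
  {s : Set 𝕜} {H : ℕ → 𝕜 → F}

theorem eqOn_iteratedDerivWithin_of_hasDerivAt_succ (hs : IsOpen s)
    (hH : ∀ k, ∀ x ∈ s, HasDerivAt (H k) (H (k + 1) x) x) (k : ℕ) :
    EqOn (iteratedDerivWithin k (H 0) s) (H k) s := by
  induction k with
  | zero => intro x _; simp
  | succ k ih =>
    intro x hx
    rw [iteratedDerivWithin_succ, derivWithin_congr ih (ih hx), derivWithin_of_isOpen hs hx]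
    exact (hH k x hx).deriv

theorem contDiffOn_of_hasDerivAt_succ (hs : IsOpen s)
    (hH : ∀ k, ∀ x ∈ s, HasDerivAt (H k) (H (k + 1) x) x) :
    ContDiffOn 𝕜 (⊤ : ℕ∞) (H 0) s := by
  rw [contDiffOn_iff_continuousOn_differentiableOn_deriv hs.uniqueDiffOn]
  refine ⟨fun m _ => ?_, fun m _ => ?_⟩
  · exact ContinuousOn.congr (fun x hx => (hH m x hx).continuousAt.continuousWithinAt)
      (eqOn_iteratedDerivWithin_of_hasDerivAt_succ hs hH m)
  · exact DifferentiableOn.congr (fun x hx => (hH m x hx).differentiableAt.differentiableWithinAt)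
      (eqOn_iteratedDerivWithin_of_hasDerivAt_succ hs hH m)

end DerivChain

theorem integrableOn_rpow_sub_half_mul_exp_neg (n : ℕ) :
    IntegrableOn (fun u : ℝ => u ^ ((n : ℝ) - 1 / 2) * exp (-u)) (Ioi 0) := by
  simpa using integrableOn_rpow_mul_exp_neg_rpow (p := 1) (s := (n : ℝ) - 1 / 2)
    (by linarith [n.cast_nonneg (α := ℝ)]) one_pos

section Subordination

variable {Y : Type*} [NormedAddCommGroup Y] [NormedSpace ℝ Y]

/-- `D n` plays the role of `φ^{(n)}` on `(0, ∞)`. -/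
structure IsMikhlinSeq (D : ℕ → ℝ → Y) : Prop where
  hasDerivAt : ∀ n, ∀ x, 0 < x → HasDerivAt (D n) (D (n + 1) x) x
  norm_le : ∀ n, ∃ C, ∀ x, 0 < x → ‖D n x‖ ≤ C / x ^ n

def subordIntegrand (D : ℕ → ℝ → Y) (n k : ℕ) (t u : ℝ) : Y :=
  (exp (-u) * (t / (2 * u)) ^ k * u ^ (-(1 / 2) : ℝ)) • D (n + k) (t ^ 2 / (4 * u))

def subordIntegral (D : ℕ → ℝ → Y) (n k : ℕ) (t : ℝ) : Y :=
  ∫ u in Ioi 0, subordIntegrand D n k t u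

/-- The claimed `k`-th derivative of `subordIntegral D 0 0`. -/
def subordDeriv (D : ℕ → ℝ → Y) (k : ℕ) (t : ℝ) : Y :=
  (-1 : ℝ) ^ (k / 2) • subordIntegral D (k / 2) (k % 2) t

theorem subordDeriv_two_mul (D : ℕ → ℝ → Y) (m : ℕ) :
    subordDeriv D (2 * m) = (-1 : ℝ) ^ m • subordIntegral D m 0 := by
  ext t
  rw [subordDeriv, Nat.mul_div_cancel_left m two_pos, Nat.mul_mod_right, Pi.smul_apply]

theorem subordDeriv_two_mul_add_one (D : ℕ → ℝ → Y) (m : ℕ) :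
    subordDeriv D (2 * m + 1) = (-1 : ℝ) ^ m • subordIntegral D m 1 := by
  ext t
  rw [subordDeriv, show (2 * m + 1) / 2 = m by omega, show (2 * m + 1) % 2 = 1 by omega,
    Pi.smul_apply]

namespace IsMikhlinSeq

variable {D : ℕ → ℝ → Y}

theorem exists_norm_subordIntegrand_le (hD : IsMikhlinSeq D) (n k : ℕ) {a : ℝ} (ha : 0 < a) :
    ∃ C, ∀ t, a ≤ t → ∀ u, 0 < u →
      ‖subordIntegrand D n k t u‖ ≤ C * (u ^ ((n : ℝ) - 1 / 2) * exp (-u)) := by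
  obtain ⟨C, hC⟩ := hD.norm_le (n + k)
  have hC0 : 0 ≤ C := by simpa using (norm_nonneg _).trans (hC 1 one_pos)
  refine ⟨C * (2 / a) ^ k * (4 / a ^ 2) ^ n, fun t hat u hu => ?_⟩
  have ht : 0 < t := ha.trans_le hat
  have hx : 0 < t ^ 2 / (4 * u) := by positivity
  rw [subordIntegrand, norm_smul, Real.norm_of_nonneg (by positivity)]
  have hratio : t / (2 * u) / (t ^ 2 / (4 * u)) = 2 / t := by field_simp; ring
  have hinv : (t ^ 2 / (4 * u))⁻¹ = 4 / t ^ 2 * u := by field_simp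
  calc exp (-u) * (t / (2 * u)) ^ k * u ^ (-(1 / 2) : ℝ) * ‖D (n + k) (t ^ 2 / (4 * u))‖
      ≤ exp (-u) * (t / (2 * u)) ^ k * u ^ (-(1 / 2) : ℝ) * (C / (t ^ 2 / (4 * u)) ^ (n + k)) := by
        gcongr; exact hC _ hx
    _ = C * (t / (2 * u) / (t ^ 2 / (4 * u))) ^ k * ((t ^ 2 / (4 * u))⁻¹) ^ n *
          (u ^ (-(1 / 2) : ℝ) * exp (-u)) := by
        generalize t / (2 * u) = A; generalize t ^ 2 / (4 * u) = X
        rw [pow_add]; ring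
    _ = C * (2 / t) ^ k * (4 / t ^ 2) ^ n * (u ^ n * u ^ (-(1 / 2) : ℝ) * exp (-u)) := by
        rw [hratio, hinv, mul_pow]; ring
    _ ≤ C * (2 / a) ^ k * (4 / a ^ 2) ^ n * (u ^ n * u ^ (-(1 / 2) : ℝ) * exp (-u)) := by
        gcongr
    _ = C * (2 / a) ^ k * (4 / a ^ 2) ^ n * (u ^ ((n : ℝ) - 1 / 2) * exp (-u)) := by
        rw [← rpow_natCast u n, ← rpow_add hu, ← sub_eq_add_neg]

theorem continuousOn_subordIntegrand (hD : IsMikhlinSeq D) (n k : ℕ) {t : ℝ} (ht : t ≠ 0) :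
    ContinuousOn (subordIntegrand D n k t) (Ioi 0) := by
  intro u (hu : 0 < u)
  have hx : 0 < t ^ 2 / (4 * u) := by positivity
  have hDc : ContinuousAt (fun u => D (n + k) (t ^ 2 / (4 * u))) u :=
    (hD.hasDerivAt _ _ hx).continuousAt.comp (f := fun u => t ^ 2 / (4 * u))
      (by fun_prop (disch := simp [hu.ne']))
  have hw : ContinuousAt (fun u : ℝ => exp (-u) * (t / (2 * u)) ^ k * u ^ (-(1 / 2) : ℝ)) u := by
    fun_prop (disch := simp [hu.ne'])
  exact (hw.smul hDc).continuousWithinAt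

theorem integrableOn_subordIntegrand (hD : IsMikhlinSeq D) (n k : ℕ) {t : ℝ} (ht : 0 < t) :
    IntegrableOn (subordIntegrand D n k t) (Ioi 0) := by
  obtain ⟨C, hC⟩ := hD.exists_norm_subordIntegrand_le n k ht
  refine Integrable.mono' ((integrableOn_rpow_sub_half_mul_exp_neg n).const_mul C)
    ((hD.continuousOn_subordIntegrand n k ht.ne').aestronglyMeasurable measurableSet_Ioi) ?_
  filter_upwards [ae_restrict_mem measurableSet_Ioi] with u hu using hC t le_rfl u hu

theorem hasDerivAt_subordIntegrand (hD : IsMikhlinSeq D) (n k : ℕ) {t u : ℝ} (ht : 0 < t)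
    (hu : 0 < u) :
    HasDerivAt (fun t => subordIntegrand D n k t u)
      ((k / t) • subordIntegrand D n k t u + subordIntegrand D n (k + 1) t u) t := by
  have hx : 0 < t ^ 2 / (4 * u) := by positivity
  have hw : HasDerivAt (fun t => exp (-u) * (t / (2 * u)) ^ k * u ^ (-(1 / 2) : ℝ))
      (k / t * (exp (-u) * (t / (2 * u)) ^ k * u ^ (-(1 / 2) : ℝ))) t := by
    refine ((((hasDerivAt_id' t).div_const (2 * u)).fun_pow k).const_mul (exp (-u))).mul_const
      (u ^ (-(1 / 2) : ℝ)) |>.congr_deriv ?_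
    rcases k with _ | k
    · simp
    · rw [Nat.add_sub_cancel, pow_succ]
      field_simp
  have hsq : HasDerivAt (fun t => t ^ 2 / (4 * u)) (t / (2 * u)) t := by
    refine ((hasDerivAt_pow 2 t).div_const (4 * u)).congr_deriv ?_
    field_simp
    ring
  have hDc : HasDerivAt (fun t => D (n + k) (t ^ 2 / (4 * u)))
      ((t / (2 * u)) • D (n + k + 1) (t ^ 2 / (4 * u))) t :=
    (hD.hasDerivAt _ _ hx).scomp t hsq
  refine (hw.smul hDc).congr_deriv ?_
  simp only [subordIntegrand, smul_smul]
  rw [add_comm]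
  congr 2
  ring

theorem hasDerivAt_subordIntegral (hD : IsMikhlinSeq D) (n k : ℕ) {t₀ : ℝ} (ht₀ : 0 < t₀) :
    HasDerivAt (subordIntegral D n k)
      ((k / t₀) • subordIntegral D n k t₀ + subordIntegral D n (k + 1) t₀) t₀ := by
  have ha : 0 < t₀ / 2 := half_pos ht₀
  obtain ⟨C₀, hC₀⟩ := hD.exists_norm_subordIntegrand_le n k ha
  obtain ⟨C₁, hC₁⟩ := hD.exists_norm_subordIntegrand_le n (k + 1) ha
  have hint₀ := hD.integrableOn_subordIntegrand n k ht₀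
  have hint₁ := hD.integrableOn_subordIntegrand n (k + 1) ht₀
  have key := hasDerivAt_integral_of_dominated_loc_of_deriv_le (μ := volume.restrict (Ioi 0))
    (F := fun t u => subordIntegrand D n k t u)
    (F' := fun t u => (k / t) • subordIntegrand D n k t u + subordIntegrand D n (k + 1) t u)
    (bound := fun u => (k / (t₀ / 2) * C₀ + C₁) * (u ^ ((n : ℝ) - 1 / 2) * exp (-u)))
    (Ioi_mem_nhds (half_lt_self ht₀)) ?_ hint₀ ((hint₀.smul _).add hint₁).aestronglyMeasurable
    ?_ ((integrableOn_rpow_sub_half_mul_exp_neg n).const_mul _) ?_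
  · have := key.2
    rwa [integral_add (f := fun u => (k / t₀) • subordIntegrand D n k t₀ u) (hint₀.smul _) hint₁,
      integral_smul] at this
  · filter_upwards [Ioi_mem_nhds ht₀] with t ht
    exact (hD.continuousOn_subordIntegrand n k (ne_of_gt ht)).aestronglyMeasurable
      measurableSet_Ioi
  · filter_upwards [ae_restrict_mem measurableSet_Ioi] with u hu t (ht : t₀ / 2 < t)
    have h₀ := hC₀ t ht.le u hu
    have ht' : 0 < t := ha.trans ht
    calc ‖(k / t) • subordIntegrand D n k t u + subordIntegrand D n (k + 1) t u‖
        ≤ k / t * ‖subordIntegrand D n k t u‖ + ‖subordIntegrand D n (k + 1) t u‖ := by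
          refine (norm_add_le _ _).trans_eq ?_
          rw [norm_smul, Real.norm_of_nonneg (by positivity)]
      _ ≤ k / (t₀ / 2) * (C₀ * (u ^ ((n : ℝ) - 1 / 2) * exp (-u))) +
            C₁ * (u ^ ((n : ℝ) - 1 / 2) * exp (-u)) := by
          gcongr
          exact hC₁ t ht.le u hu
      _ = _ := by ring
  · filter_upwards [ae_restrict_mem measurableSet_Ioi] with u hu t (ht : t₀ / 2 < t)
    exact hD.hasDerivAt_subordIntegrand n k (ha.trans ht) hu

theorem hasDerivAt_subordIntegrand_succ_zero_right (hD : IsMikhlinSeq D) (n : ℕ) {t u : ℝ}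
    (ht : t ≠ 0) (hu : 0 < u) :
    HasDerivAt (subordIntegrand D (n + 1) 0 t)
      (-subordIntegrand D (n + 1) 0 t u -
        (t⁻¹ • subordIntegrand D n 1 t u + subordIntegrand D n 2 t u)) u := by
  have hf : subordIntegrand D (n + 1) 0 t =
      fun u => (exp (-u) * u ^ (-(1 / 2) : ℝ)) • D (n + 1) (t ^ 2 / (4 * u)) := by
    ext u; simp [subordIntegrand]
  have hw : HasDerivAt (fun u => exp (-u) * u ^ (-(1 / 2) : ℝ))
      (exp (-u) * (-1) * u ^ (-(1 / 2) : ℝ) + exp (-u) * (-(1 / 2) * u ^ (-(1 / 2) - 1 : ℝ))) u :=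
    (hasDerivAt_neg u).exp.mul (hasDerivAt_rpow_const (Or.inl hu.ne'))
  have hsq : HasDerivAt (fun u => t ^ 2 / (4 * u)) (-(t ^ 2 / (4 * u ^ 2))) u := by
    refine ((hasDerivAt_inv hu.ne').const_mul (t ^ 2 / 4)).congr_deriv ?_
      |>.congr_of_eventuallyEq ?_
    · field_simp
    · filter_upwards with v; field_simp
  rw [hf]
  refine (hw.smul ((hD.hasDerivAt _ _ (by positivity)).scomp u hsq)).congr_deriv ?_
  have hrpow : u ^ (-(1 / 2) - 1 : ℝ) = u ^ (-(1 / 2) : ℝ) / u := by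
    rw [rpow_sub hu, rpow_one]
  simp only [subordIntegrand, hrpow, add_assoc, Nat.reduceAdd, Function.comp_apply]
  match_scalars <;> field_simp <;> ring

theorem inv_smul_subordIntegral_one_add_two [CompleteSpace Y] (hD : IsMikhlinSeq D) (n : ℕ)
    {t : ℝ} (ht : 0 < t) :
    t⁻¹ • subordIntegral D n 1 t + subordIntegral D n 2 t = -subordIntegral D (n + 1) 0 t := by
  obtain ⟨C, hC⟩ := hD.exists_norm_subordIntegrand_le (n + 1) 0 ht
  set p : ℝ := ((n + 1 : ℕ) : ℝ) - 1 / 2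
  have hp : 0 < p := by simp only [p]; push_cast; linarith [n.cast_nonneg (α := ℝ)]
  have hbound : ∀ u ∈ Ioi (0 : ℝ), ‖subordIntegrand D (n + 1) 0 t u‖ ≤ C * (u ^ p * exp (-u)) :=
    fun u hu => hC t le_rfl u hu
  have hzero : subordIntegrand D (n + 1) 0 t 0 = 0 := by simp [subordIntegrand]
  have hcont : ContinuousWithinAt (subordIntegrand D (n + 1) 0 t) (Ici 0) 0 := by
    rw [← continuousWithinAt_Ioi_iff_Ici, ContinuousWithinAt, hzero]
    refine squeeze_zero_norm' (eventually_nhdsWithin_of_forall hbound) ?_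
    have : ContinuousAt (fun u : ℝ => C * (u ^ p * exp (-u))) 0 := by
      fun_prop (disch := exact Or.inr hp.le)
    simpa [zero_rpow hp.ne'] using this.tendsto.mono_left nhdsWithin_le_nhds
  have htop : Tendsto (subordIntegrand D (n + 1) 0 t) atTop (𝓝 0) := by
    refine squeeze_zero_norm' (eventually_atTop.2 ⟨1, fun u hu => hbound u (by simp; linarith)⟩) ?_
    simpa using (tendsto_rpow_mul_exp_neg_mul_atTop_nhds_zero p 1 one_pos).const_mul C
  have hint₀ : IntegrableOn (fun u => -subordIntegrand D (n + 1) 0 t u) (Ioi 0) :=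
    (hD.integrableOn_subordIntegrand (n + 1) 0 ht).neg
  have hint₁ : IntegrableOn (fun u => t⁻¹ • subordIntegrand D n 1 t u) (Ioi 0) :=
    (hD.integrableOn_subordIntegrand n 1 ht).smul t⁻¹
  have hint₂ := hD.integrableOn_subordIntegrand n 2 ht
  have key := integral_Ioi_of_hasDerivAt_of_tendsto hcont
    (fun u hu => hD.hasDerivAt_subordIntegrand_succ_zero_right n ht.ne' hu)
    (hint₀.sub (hint₁.add hint₂)) htop
  rw [integral_sub (g := fun u => t⁻¹ • subordIntegrand D n 1 t u + subordIntegrand D n 2 t u)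
    hint₀ (hint₁.add hint₂), integral_neg, integral_add hint₁ hint₂, integral_smul,
    hzero, sub_zero, sub_eq_zero] at key
  exact key.symm

theorem hasDerivAt_subordDeriv [CompleteSpace Y] (hD : IsMikhlinSeq D) (k : ℕ) {t : ℝ}
    (ht : 0 < t) :
    HasDerivAt (subordDeriv D k) (subordDeriv D (k + 1) t) t := by
  obtain ⟨m, rfl | rfl⟩ := Nat.even_or_odd' k
  · rw [subordDeriv_two_mul, subordDeriv_two_mul_add_one]
    simpa using (hD.hasDerivAt_subordIntegral m 0 ht).const_smul ((-1 : ℝ) ^ m)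
  · rw [subordDeriv_two_mul_add_one, show 2 * m + 1 + 1 = 2 * (m + 1) by ring,
      subordDeriv_two_mul]
    refine ((hD.hasDerivAt_subordIntegral m 1 ht).const_smul ((-1 : ℝ) ^ m)).congr_deriv ?_
    rw [Pi.smul_apply, Nat.cast_one, one_div, hD.inv_smul_subordIntegral_one_add_two m ht,
      pow_succ, mul_comm, mul_smul, neg_one_smul, smul_neg]

end IsMikhlinSeq

theorem isMikhlinSeq_iteratedDerivWithin {φ : ℝ → Y} (hbdd : ∃ M, ∀ t, 0 < t → ‖φ t‖ ≤ M)
    (hsmooth : ContDiffOn ℝ (⊤ : ℕ∞) φ (Ioi 0))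
    (hder : ∀ n : ℕ, 1 ≤ n → ∃ C : ℝ, ∀ t : ℝ, 0 < t →
      ‖iteratedDerivWithin n φ (Ioi 0) t‖ ≤ C / t ^ n) :
    IsMikhlinSeq (fun n => iteratedDerivWithin n φ (Ioi 0)) where
  hasDerivAt n x hx := by
    have hdiff := hsmooth.differentiableOn_iteratedDerivWithin (m := n)
      (by exact_mod_cast WithTop.coe_lt_top _) isOpen_Ioi.uniqueDiffOn
    have := ((hdiff x hx).differentiableAt (Ioi_mem_nhds hx)).hasDerivAt
    rwa [← derivWithin_of_isOpen isOpen_Ioi hx, ← iteratedDerivWithin_succ] at this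
  norm_le
    | 0 => by simpa using hbdd
    | n + 1 => hder (n + 1) n.succ_pos

end Subordination

/-- if `φ : (0,∞) → Y` is a bounded `C^∞` function with
`‖φ^{(n)}(t)‖ ≤ C_n t^{-n}` for all `n ≥ 1` and `t > 0`, then
`ψ(t) := ∫₀^∞ e^{-u} φ(t²/(4u)) u^{-1/2} du` is `C^∞` on `(0,∞)` and its
derivatives are given by the stated formulas. -/
theorem stmt8 {Y : Type*} [NormedAddCommGroup Y] [NormedSpace ℝ Y] [CompleteSpace Y]
    (φ : ℝ → Y)
    (hbdd : ∃ M : ℝ, ∀ t : ℝ, 0 < t → ‖φ t‖ ≤ M)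
    (hsmooth : ContDiffOn ℝ (⊤ : ℕ∞) φ (Set.Ioi 0))
    (hder : ∀ n : ℕ, 1 ≤ n → ∃ C : ℝ, ∀ t : ℝ, 0 < t →
      ‖iteratedDerivWithin n φ (Set.Ioi 0) t‖ ≤ C / t ^ n) :
    ContDiffOn ℝ (⊤ : ℕ∞)
      (fun t : ℝ => ∫ u in Set.Ioi (0:ℝ),
        (Real.exp (-u) * u ^ (-(1/2) : ℝ)) • φ (t ^ 2 / (4 * u))) (Set.Ioi 0) ∧
    (∀ n : ℕ, ∀ t : ℝ, 0 < t →
      iteratedDerivWithin (2 * n)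
        (fun s : ℝ => ∫ u in Set.Ioi (0:ℝ),
          (Real.exp (-u) * u ^ (-(1/2) : ℝ)) • φ (s ^ 2 / (4 * u))) (Set.Ioi 0) t
      = ((-1 : ℝ) ^ n) •
        ∫ u in Set.Ioi (0:ℝ), (Real.exp (-u) * u ^ (-(1/2) : ℝ)) •
          iteratedDerivWithin n φ (Set.Ioi 0) (t ^ 2 / (4 * u))) ∧
    (∀ n : ℕ, ∀ t : ℝ, 0 < t →
      iteratedDerivWithin (2 * n + 1)
        (fun s : ℝ => ∫ u in Set.Ioi (0:ℝ),
          (Real.exp (-u) * u ^ (-(1/2) : ℝ)) • φ (s ^ 2 / (4 * u))) (Set.Ioi 0) t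
      = ((-1 : ℝ) ^ n) •
        ∫ u in Set.Ioi (0:ℝ), (Real.exp (-u) * (t / (2 * u)) * u ^ (-(1/2) : ℝ)) •
          iteratedDerivWithin (n + 1) φ (Set.Ioi 0) (t ^ 2 / (4 * u))) := by
  have hD := isMikhlinSeq_iteratedDerivWithin hbdd hsmooth hder
  have hderiv : ∀ k, ∀ t ∈ Ioi (0 : ℝ), HasDerivAt (subordDeriv _ k) (subordDeriv _ (k + 1) t) t :=
    fun k t ht => hD.hasDerivAt_subordDeriv k ht
  have hψ : (fun t : ℝ => ∫ u in Ioi (0 : ℝ), (exp (-u) * u ^ (-(1 / 2) : ℝ)) • φ (t ^ 2 / (4 * u)))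
      = subordDeriv (fun n => iteratedDerivWithin n φ (Ioi 0)) 0 := by
    ext t
    simp [subordDeriv, subordIntegral, subordIntegrand]
  rw [hψ]
  refine ⟨contDiffOn_of_hasDerivAt_succ isOpen_Ioi hderiv, fun n t ht => ?_, fun n t ht => ?_⟩
  · rw [eqOn_iteratedDerivWithin_of_hasDerivAt_succ isOpen_Ioi hderiv (2 * n) ht,
      subordDeriv_two_mul]
    simp [subordIntegral, subordIntegrand]
  · rw [eqOn_iteratedDerivWithin_of_hasDerivAt_succ isOpen_Ioi hderiv (2 * n + 1) ht,
      subordDeriv_two_mul_add_one]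
    simp [subordIntegral, subordIntegrand]
end
end
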